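/- Let α be a positive transcendental real number. Then there exists an additive subgroup G of ℝ² which contains (1,1), is dense in ℝ², and satisfies I(G) = { [[α^{2n},0],[0,α^{2n}]] : n ∈ ℤ }. -/

import Mathlib

/-!
Let `u = α²` and let `R = ℤ[u, u⁻¹] ⊆ ℝ`. Since `u` is transcendental, evaluation at `u` identifies
`R` with the Laurent polynomial ring `ℤ[T, T⁻¹]`, whose units are `±Tⁿ`; so the positive units of
`R` are exactly the powers `uⁿ`. Moreover `R` contains `1` and the irrational `u`, hence is dense,
and, being countable, its fraction field misses some `β`. Take `G = R (1, 1) + R (0, β)`.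
If `diag(a, b)` preserves `G`, then `a, a⁻¹, b ∈ R` and `b - a ∈ β R`, which forces `b = a`
since `β` is not a ratio of elements of `R`; an antidiagonal matrix would put `b` and `β b` in
`R`. Conversely, scalar multiplication by a unit of `R` preserves `G`.
-/

/-- For an additive subgroup `G` of `ℝ²` (elements viewed as row vectors), `IG G` is the
set of invertible real `2 × 2` matrices `B` of the form `[[a,0],[0,b]]` or `[[0,a],[b,0]]`
with `a > 0`, `b > 0`, such that right multiplication by `B` maps `G` onto `G`. -/
def IG (G : AddSubgroup (Fin 2 → ℝ)) : Set (Matrix (Fin 2) (Fin 2) ℝ) :=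
  {B | IsUnit B ∧
    (∃ a b : ℝ, 0 < a ∧ 0 < b ∧
      (B = Matrix.of ![![a, 0], ![0, b]] ∨ B = Matrix.of ![![0, a], ![b, 0]])) ∧
    (fun v => Matrix.vecMul v B) '' (G : Set (Fin 2 → ℝ)) = (G : Set (Fin 2 → ℝ))}

open LaurentPolynomial

namespace LaurentPolynomial

variable {R : Type*} [CommRing R]

instance [Countable R] : Countable R[T;T⁻¹] := AddMonoidAlgebra.coeff_injective.countable

theorem exists_eq_C_mul_T_of_isUnit [IsDomain R] {f : R[T;T⁻¹]} (hf : IsUnit f) :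
    ∃ (r : Rˣ) (n : ℤ), f = C (r : R) * T n := by
  obtain ⟨g, hfg⟩ := hf.exists_right_inv
  obtain ⟨m, f', hf'⟩ := f.exists_T_pow
  obtain ⟨n, g', hg'⟩ := g.exists_T_pow
  have hprod : f' * g' = Polynomial.X ^ (m + n) := by
    apply Polynomial.toLaurent_injective
    rw [map_mul, hf', hg', Polynomial.toLaurent_X_pow, mul_mul_mul_comm, hfg, one_mul, ← T_add,
      Nat.cast_add]
  obtain ⟨i, -, v, hv⟩ := (dvd_prime_pow Polynomial.prime_X _).mp ⟨g', hprod.symm⟩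
  obtain ⟨r, hr, hrv⟩ := Polynomial.isUnit_iff.mp v⁻¹.isUnit
  refine ⟨hr.unit, i - m, ?_⟩
  have hf'_eq : f' = Polynomial.C r * Polynomial.X ^ i := by
    rw [hrv, ← hv, mul_comm, Units.mul_inv_cancel_right]
  rw [← (isUnit_T m).mul_left_inj, ← hf', hf'_eq, mul_assoc, ← T_add]
  simp only [Polynomial.toLaurent_C_mul_eq, Polynomial.toLaurent_X_pow, IsUnit.unit_spec,
    sub_add_cancel]

theorem eval₂_algebraMap_injective {S : Type*} [CommRing S] [Algebra R S] {x : Sˣ}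
    (hx : Transcendental R (x : S)) : Function.Injective (eval₂ (algebraMap R S) x) := by
  refine (injective_iff_map_eq_zero _).mpr fun f hf => ?_
  obtain ⟨n, f', hf'⟩ := f.exists_T_pow
  have hf'0 : Polynomial.aeval (x : S) f' = 0 := by
    rw [Polynomial.aeval_def, ← eval₂_toLaurent, hf', map_mul, hf, zero_mul]
  rw [transcendental_iff_injective.mp hx |>.eq_iff' (map_zero _)] at hf'0
  rw [← (isUnit_T n).mul_left_eq_zero, ← hf', hf'0, map_zero]

end LaurentPolynomial

/-- The subring `ℤ[u, u⁻¹]` of `K`. -/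
noncomputable def laurentSubring {K : Type*} [CommRing K] (u : Kˣ) : Subring K :=
  (eval₂ (algebraMap ℤ K) u).range

theorem countable_laurentSubring {K : Type*} [CommRing K] (u : Kˣ) :
    (laurentSubring u : Set K).Countable :=
  Set.countable_range _

section laurentSubring

variable {K : Type*} [Field K] {u : Kˣ}

theorem zpow_mem_laurentSubring (n : ℤ) : (u : K) ^ n ∈ laurentSubring u :=
  ⟨T n, by rw [eval₂_T, Units.val_zpow_eq_zpow_val]⟩

theorem eq_zpow_of_mem_laurentSubring [LinearOrder K] [IsStrictOrderedRing K]
    (hu : Transcendental ℤ (u : K)) (hu0 : 0 < (u : K)) {a : K} (ha : 0 < a)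
    (haR : a ∈ laurentSubring u) (haR' : a⁻¹ ∈ laurentSubring u) : ∃ n : ℤ, a = (u : K) ^ n := by
  obtain ⟨f, rfl⟩ := haR
  obtain ⟨g, hg⟩ := haR'
  have hfg : f * g = 1 :=
    eval₂_algebraMap_injective hu (by rw [map_mul, hg, map_one, mul_inv_cancel₀ ha.ne'])
  obtain ⟨r, n, rfl⟩ := exists_eq_C_mul_T_of_isUnit (IsUnit.of_mul_eq_one g hfg)
  rcases Int.units_eq_one_or r with rfl | rfl
  · exact ⟨n, by simp⟩
  · simp only [algebraMap_int_eq, Units.val_neg, Units.val_one, eq_intCast, Int.cast_one,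
      neg_mul, one_mul, map_neg, eval₂_T, Units.val_zpow_eq_zpow_val,
      Left.neg_pos_iff] at ha
    exact absurd ha (zpow_pos hu0 n).not_gt

end laurentSubring

theorem Subfield.countable_closure {K : Type*} [DivisionRing K] {s : Set K} (hs : s.Countable) :
    (Subfield.closure s : Set K).Countable := by
  have := hs.to_subtype
  rw [← Set.countable_coe_iff, ← Cardinal.mk_le_aleph0_iff]
  exact (Subfield.cardinalMk_closure_le_max s).trans (max_le Cardinal.mk_le_aleph0 le_rfl)

theorem Subring.mem_subfieldClosure_of_mul_mem {K : Type*} [Field K] {R : Subring K} {β b : K}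
    (hb : b ∈ R) (hb0 : b ≠ 0) (hβb : β * b ∈ R) : β ∈ Subfield.closure (R : Set K) := by
  rw [← mul_div_cancel_right₀ β hb0]
  exact div_mem (Subfield.subset_closure hβb) (Subfield.subset_closure hb)

theorem Subring.dense_of_irrational_mem {R : Subring ℝ} {x : ℝ} (hx : Irrational x)
    (hxR : x ∈ R) : Dense (R : Set ℝ) := by
  refine (dense_addSubgroupClosure_pair_iff.mpr (by rwa [div_one])).mono ?_
  rw [← R.coe_toAddSubgroup, SetLike.coe_subset_coe, AddSubgroup.closure_le]
  exact Set.pair_subset hxR R.one_mem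

section vecMul

open Matrix

variable {α : Type*} [NonUnitalNonAssocSemiring α] (v : Fin 2 → α) (a b : α)

theorem vecMul_diag : v ᵥ* of ![![a, 0], ![0, b]] = ![v 0 * a, v 1 * b] := by
  ext j
  fin_cases j <;> simp [vecHead, vecTail]

theorem vecMul_antidiag : v ᵥ* of ![![0, a], ![b, 0]] = ![v 1 * b, v 0 * a] := by
  ext j
  fin_cases j <;> simp [vecHead, vecTail]

end vecMul

def shear (β : ℝ) : ℝ × ℝ →+ (Fin 2 → ℝ) where
  toFun p := ![p.1, p.1 + β * p.2]
  map_zero' := by simp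
  map_add' p q := by
    ext i
    fin_cases i <;> simp [mul_add, add_add_add_comm]

theorem continuous_shear (β : ℝ) : Continuous (shear β) := by
  simp only [shear, AddMonoidHom.coe_mk, ZeroHom.coe_mk]
  fun_prop

theorem surjective_shear {β : ℝ} (hβ : β ≠ 0) : Function.Surjective (shear β) := by
  intro v
  refine ⟨(v 0, (v 1 - v 0) / β), ?_⟩
  ext i
  fin_cases i <;> simp [shear, mul_div_cancel₀ _ hβ]

/-- The subgroup `R (1, 1) + R (0, β)` of `ℝ²`. -/
def pairSpan (R : Subring ℝ) (β : ℝ) : AddSubgroup (Fin 2 → ℝ) :=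
  (R.toAddSubgroup.prod R.toAddSubgroup).map (shear β)

section pairSpan

open Matrix

variable {R : Subring ℝ} {β : ℝ}

theorem mem_pairSpan {v : Fin 2 → ℝ} :
    v ∈ pairSpan R β ↔ v 0 ∈ R ∧ ∃ r ∈ R, v 1 = v 0 + β * r := by
  constructor
  · rintro ⟨⟨x, r⟩, ⟨hx, hr⟩, rfl⟩
    exact ⟨hx, r, hr, rfl⟩
  · rintro ⟨hx, r, hr, hv⟩
    refine ⟨(v 0, r), ⟨hx, hr⟩, ?_⟩
    ext i
    fin_cases i <;> simp [shear, hv]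

theorem vec2_mem_pairSpan {a b : ℝ} :
    ![a, b] ∈ pairSpan R β ↔ a ∈ R ∧ ∃ r ∈ R, b = a + β * r :=
  mem_pairSpan

theorem one_one_mem_pairSpan : ![1, 1] ∈ pairSpan R β :=
  vec2_mem_pairSpan.mpr ⟨R.one_mem, 0, R.zero_mem, by simp⟩

theorem zero_beta_mem_pairSpan : ![0, β] ∈ pairSpan R β :=
  vec2_mem_pairSpan.mpr ⟨R.zero_mem, 1, R.one_mem, by simp⟩

theorem smul_mem_pairSpan {c : ℝ} (hc : c ∈ R) {v : Fin 2 → ℝ} (hv : v ∈ pairSpan R β) :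
    c • v ∈ pairSpan R β := by
  obtain ⟨hv0, r, hr, hv1⟩ := mem_pairSpan.mp hv
  refine mem_pairSpan.mpr ⟨R.mul_mem hc hv0, c * r, R.mul_mem hc hr, ?_⟩
  simp only [Pi.smul_apply, smul_eq_mul, hv1]
  ring

theorem dense_pairSpan (hR : Dense (R : Set ℝ)) (hβ : β ≠ 0) :
    Dense (pairSpan R β : Set (Fin 2 → ℝ)) :=
  (surjective_shear hβ).denseRange.dense_image (continuous_shear β) (hR.prod hR)

theorem eq_of_image_vecMul_diag (hβ : β ∉ Subfield.closure (R : Set ℝ)) {a b : ℝ}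
    (h : (· ᵥ* of ![![a, 0], ![0, b]]) '' pairSpan R β = pairSpan R β) :
    a ∈ R ∧ a⁻¹ ∈ R ∧ b = a := by
  have hmaps {v : Fin 2 → ℝ} (hv : v ∈ pairSpan R β) : ![v 0 * a, v 1 * b] ∈ pairSpan R β := by
    rw [← vecMul_diag, ← SetLike.mem_coe, ← h]
    exact Set.mem_image_of_mem _ hv
  have h11 := vec2_mem_pairSpan.mp (hmaps one_one_mem_pairSpan)
  have h0β := vec2_mem_pairSpan.mp (hmaps zero_beta_mem_pairSpan)
  simp only [cons_val_zero, cons_val_one, one_mul, zero_mul, zero_add] at h11 h0β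
  obtain ⟨haR, r, hr, hba⟩ := h11
  obtain ⟨-, s, hs, hβb⟩ := h0β
  have hβ0 : β ≠ 0 := fun h0 => hβ (h0 ▸ zero_mem _)
  have hbR : b ∈ R := mul_left_cancel₀ hβ0 hβb ▸ hs
  obtain ⟨v, hv, hv1 : v ᵥ* of ![![a, 0], ![0, b]] = ![1, 1]⟩ :
      ![1, 1] ∈ (· ᵥ* of ![![a, 0], ![0, b]]) '' pairSpan R β := by
    rw [h]
    exact one_one_mem_pairSpan
  rw [vecMul_diag] at hv1
  have hva : v 0 = a⁻¹ := eq_inv_of_mul_eq_one_left (congrFun hv1 0)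
  refine ⟨haR, hva ▸ (mem_pairSpan.mp hv).1, ?_⟩
  by_contra hne
  have hr0 : r ≠ 0 := by
    rintro rfl
    exact hne (by simpa using hba)
  have hβr : β * r = b - a := by
    rw [hba]
    ring
  exact hβ (R.mem_subfieldClosure_of_mul_mem hr hr0 (hβr ▸ R.sub_mem hbR haR))

theorem image_vecMul_antidiag_ne (hβ : β ∉ Subfield.closure (R : Set ℝ)) {a b : ℝ}
    (hb : b ≠ 0) : (· ᵥ* of ![![0, a], ![b, 0]]) '' pairSpan R β ≠ pairSpan R β := by
  intro h
  have hmaps {v : Fin 2 → ℝ} (hv : v ∈ pairSpan R β) : ![v 1 * b, v 0 * a] ∈ pairSpan R β := by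
    rw [← vecMul_antidiag, ← SetLike.mem_coe, ← h]
    exact Set.mem_image_of_mem _ hv
  have hbR := (vec2_mem_pairSpan.mp (hmaps one_one_mem_pairSpan)).1
  have hβbR := (vec2_mem_pairSpan.mp (hmaps zero_beta_mem_pairSpan)).1
  simp only [cons_val_zero, cons_val_one, one_mul] at hbR hβbR
  exact hβ (R.mem_subfieldClosure_of_mul_mem hbR hb hβbR)

theorem image_vecMul_scalar {c : ℝ} (hc : c ≠ 0) (hcR : c ∈ R) (hcR' : c⁻¹ ∈ R) :
    (· ᵥ* of ![![c, 0], ![0, c]]) '' pairSpan R β = pairSpan R β := by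
  have hsmul : (· ᵥ* of ![![c, 0], ![0, c]]) = (c • ·) := by
    funext v
    rw [vecMul_diag]
    ext i
    fin_cases i <;> simp [mul_comm]
  rw [hsmul]
  refine (Set.image_subset_iff.mpr fun v hv => smul_mem_pairSpan hcR hv).antisymm fun w hw => ?_
  exact ⟨c⁻¹ • w, smul_mem_pairSpan hcR' hw, smul_inv_smul₀ hc w⟩

theorem IG_pairSpan (hβ : β ∉ Subfield.closure (R : Set ℝ)) :
    IG (pairSpan R β) = {B | ∃ c, 0 < c ∧ c ∈ R ∧ c⁻¹ ∈ R ∧ B = of ![![c, 0], ![0, c]]} := by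
  ext B
  constructor
  · rintro ⟨-, ⟨a, b, ha, hb, rfl | rfl⟩, h⟩
    · obtain ⟨haR, haR', rfl⟩ := eq_of_image_vecMul_diag hβ h
      exact ⟨b, hb, haR, haR', rfl⟩
    · exact absurd h (image_vecMul_antidiag_ne hβ hb.ne')
  · rintro ⟨c, hc, hcR, hcR', rfl⟩
    refine ⟨?_, ⟨c, c, hc, hc, Or.inl rfl⟩, image_vecMul_scalar hc.ne' hcR hcR'⟩
    rw [isUnit_iff_isUnit_det, det_fin_two_of, isUnit_iff_ne_zero]
    simpa using hc.ne'

end pairSpan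

theorem stmt4 (α : ℝ) (hα : 0 < α) (htr : Transcendental ℚ α) :
    ∃ G : AddSubgroup (Fin 2 → ℝ),
      (![1, 1] : Fin 2 → ℝ) ∈ G ∧
      Dense (G : Set (Fin 2 → ℝ)) ∧
      IG G = {B | ∃ n : ℤ, B = Matrix.of ![![α ^ (2 * n), 0], ![0, α ^ (2 * n)]]} := by
  set u : ℝˣ := Units.mk0 (α ^ 2) (by positivity)
  have hu : Transcendental ℚ (u : ℝ) := htr.pow two_pos
  have hu0 : 0 < (u : ℝ) := by rw [Units.val_mk0]; positivity
  obtain ⟨β, hβ⟩ : ∃ β, β ∉ Subfield.closure (laurentSubring u : Set ℝ) :=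
    (Set.ne_univ_iff_exists_notMem _).mp fun h =>
      Set.not_countable_univ (h ▸ Subfield.countable_closure (countable_laurentSubring u))
  have hβ0 : β ≠ 0 := fun h => hβ (h ▸ zero_mem _)
  have hR : Dense (laurentSubring u : Set ℝ) :=
    Subring.dense_of_irrational_mem hu.irrational
      (by simpa only [zpow_one] using zpow_mem_laurentSubring (u := u) 1)
  refine ⟨pairSpan (laurentSubring u) β, one_one_mem_pairSpan, dense_pairSpan hR hβ0, ?_⟩
  have hpow (n : ℤ) : α ^ (2 * n) = (u : ℝ) ^ n := by
    rw [Units.val_mk0, zpow_mul]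
    norm_cast
  rw [IG_pairSpan hβ]
  ext B
  simp only [Set.mem_ofPred_eq, hpow]
  constructor
  · rintro ⟨c, hc, hcR, hcR', rfl⟩
    obtain ⟨n, rfl⟩ := eq_zpow_of_mem_laurentSubring
      (hu.restrictScalars (algebraMap ℤ ℚ).injective_int) hu0 hc hcR hcR'
    exact ⟨n, rfl⟩
  · rintro ⟨n, rfl⟩
    refine ⟨_, zpow_pos hu0 n, zpow_mem_laurentSubring n, ?_, rfl⟩
    rw [← zpow_neg]
    exact zpow_mem_laurentSubring (-n)
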